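/- arXiv:2409.19017 — 6 statements merged into one kernel-verified Lean document; each statement's English description precedes it below -/
import Mathlib

section
/- For a real number S > 1, define the sequence (a_i) by a_0 = 1 and a_{i+1} = 1 - (1 - 1/S)^{a_i · S} (real exponentiation). Then a_i ≥ 1/S for every i ≥ 0. -/
/-- For a real `S > 1`, the sequence defined by `a 0 = 1` and
`a (i+1) = 1 - (1 - 1/S) ^ (a i * S)` (real exponentiation) satisfies `a i ≥ 1/S` for all `i`. -/
theorem seq_ge_one_div (S : ℝ) (hS : 1 < S) (a : ℕ → ℝ) (ha0 : a 0 = 1)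
    (harec : ∀ i, a (i + 1) = 1 - (1 - 1 / S) ^ (a i * S)) :
    ∀ i, 1 / S ≤ a i := by
  have hS0 : (0:ℝ) < S := lt_trans one_pos hS
  have hb0 : (0:ℝ) < 1 - 1 / S := by
    have : 1 / S < 1 := by rw [div_lt_one hS0]; exact hS
    linarith
  have hb1 : 1 - 1 / S ≤ 1 := by
    have : 0 < 1 / S := by positivity
    linarith
  intro i
  induction i with
  | zero => rw [ha0, div_le_one hS0]; exact le_of_lt hS
  | succ n ih =>
    rw [harec]
    have hexp : (1:ℝ) ≤ a n * S := by
      calc (1:ℝ) = (1/S) * S := by field_simp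
        _ ≤ a n * S := by nlinarith
    have h := Real.rpow_le_rpow_of_exponent_ge hb0 hb1 hexp
    rw [Real.rpow_one] at h
    linarith
end

section
/- For a real number S > 1, define the sequence (a_i) by a_0 = 1 and a_{i+1} = 1 - (1 - 1/S)^{a_i · S} (real exponentiation). Then the sequence (a_i) is strictly decreasing: a_{i+1} < a_i for every i ≥ 0. -/
/-- For a real `S > 1`, the sequence defined by `a 0 = 1` and
`a (i+1) = 1 - (1 - 1/S) ^ (a i * S)` (real exponentiation) is strictly decreasing. -/
theorem seq_strict_anti (S : ℝ) (hS : 1 < S) (a : ℕ → ℝ) (ha0 : a 0 = 1)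
    (harec : ∀ i, a (i + 1) = 1 - (1 - 1 / S) ^ (a i * S)) :
    ∀ i, a (i + 1) < a i := by
  have hS0 : (0:ℝ) < S := lt_trans one_pos hS
  have hq0 : (0:ℝ) < 1 - 1 / S := by
    have : 1 / S < 1 := by
      rw [div_lt_one hS0]; exact hS
    linarith
  intro i
  induction i with
  | zero =>
    rw [harec 0, ha0]
    have := Real.rpow_pos_of_pos hq0 (1 * S)
    linarith
  | succ n ih =>
    rw [harec (n + 1)]
    have hmul : a (n + 1) * S < a n * S := by
      exact mul_lt_mul_of_pos_right ih hS0
    have hq1 : 1 - 1 / S < 1 := by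
      have : 0 < 1 / S := by positivity
      linarith
    have h := Real.rpow_lt_rpow_of_exponent_gt hq0 hq1 hmul
    have h2 := harec n
    linarith
end

section
/- For a real number S > 1, define the sequence (a_i) by a_0 = 1 and a_{i+1} = 1 - (1 - 1/S)^{a_i · S} (real exponentiation). Then lim_{i→∞} a_i = 1/S. -/
open Filter Real

/-- For a real `S > 1`, the sequence defined by `a 0 = 1` and
`a (i+1) = 1 - (1 - 1/S) ^ (a i * S)` (real exponentiation) converges to `1/S`. -/
theorem seq_tendsto_one_div (S : ℝ) (hS : 1 < S) (a : ℕ → ℝ) (ha0 : a 0 = 1)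
    (harec : ∀ i, a (i + 1) = 1 - (1 - 1 / S) ^ (a i * S)) :
    Tendsto a atTop (nhds (1 / S)) := by
  have hS0 : (0:ℝ) < S := lt_trans one_pos hS
  have hinv : 0 < 1 / S := by positivity
  have hinv1 : 1 / S < 1 := by rw [div_lt_one hS0]; exact hS
  set q : ℝ := 1 - 1 / S with hq
  have hq0 : 0 < q := by rw [hq]; linarith
  have hq1 : q < 1 := by rw [hq]; linarith
  have hs : (-1 : ℝ) ≤ -(1/S) := by linarith
  -- lower bound
  have hlb : ∀ i, 1 / S ≤ a i := by
    intro i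
    induction i with
    | zero => rw [ha0]; linarith
    | succ n ih =>
      rw [harec n]
      have h1 : (1:ℝ) ≤ a n * S := by
        rw [← div_mul_cancel₀ (1:ℝ) hS0.ne']
        exact mul_le_mul_of_nonneg_right ih hS0.le
      have := Real.rpow_le_rpow_of_exponent_ge hq0 hq1.le h1
      rw [Real.rpow_one] at this
      have : q ^ (a n * S) ≤ 1 - 1/S := this
      linarith
  -- monotone decreasing
  have hanti : Antitone a := by
    apply antitone_nat_of_succ_le
    intro n
    rw [harec n]
    have h1 : (1:ℝ) ≤ a n * S := by
      rw [← div_mul_cancel₀ (1:ℝ) hS0.ne']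
      exact mul_le_mul_of_nonneg_right (hlb n) hS0.le
    have hber := one_add_mul_self_le_rpow_one_add hs h1
    have heq : (1 + -(1/S)) = q := by ring
    rw [heq] at hber
    have : 1 + (a n * S) * -(1 / S) = 1 - a n := by
      field_simp; ring
    rw [this] at hber
    linarith
  have hbdd : BddBelow (Set.range a) := ⟨1/S, by rintro x ⟨i, rfl⟩; exact hlb i⟩
  set L : ℝ := ⨅ i, a i with hL
  have htend : Tendsto a atTop (nhds L) := tendsto_atTop_ciInf hanti hbdd
  have hLlb : 1 / S ≤ L := le_ciInf hlb
  -- limit is a fixed point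
  have hcont : Continuous (fun x : ℝ => 1 - q ^ (x * S)) := by
    have : Continuous (fun x : ℝ => Real.exp ((x * S) * Real.log q)) := by continuity
    have heq : (fun x : ℝ => 1 - q ^ (x * S)) =
        fun x => 1 - Real.exp ((x * S) * Real.log q) := by
      funext x
      rw [Real.rpow_def_of_pos hq0, mul_comm (Real.log q)]
    rw [heq]
    exact continuous_const.sub this
  have h1 : Tendsto (fun i => a (i + 1)) atTop (nhds L) :=
    htend.comp (tendsto_add_atTop_nat 1)
  have h2 : Tendsto (fun i => 1 - q ^ (a i * S)) atTop (nhds (1 - q ^ (L * S))) :=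
    (hcont.tendsto L).comp htend
  have hfix : L = 1 - q ^ (L * S) := by
    apply tendsto_nhds_unique h1
    simpa only [harec] using h2
  -- L = 1/S
  have : L ≤ 1 / S := by
    by_contra hc
    push_neg at hc
    have hp : 1 < L * S := by
      calc (1:ℝ) = (1/S) * S := by field_simp
      _ < L * S := by exact mul_lt_mul_of_pos_right hc hS0
    have hs' : -(1/S) ≠ 0 := neg_ne_zero.mpr (ne_of_gt hinv)
    have hber := one_add_mul_self_lt_rpow_one_add hs hs' hp
    have heq : (1 + -(1/S)) = q := by ring
    rw [heq] at hber
    have h3 : 1 + (L * S) * -(1 / S) = 1 - L := by field_simp; ring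
    rw [h3] at hber
    linarith [hfix]
  have hLeq : L = 1 / S := le_antisymm this hLlb
  rwa [hLeq] at htend
end

section
/- Let S > 1 be a real number and define f(x) = 1 - (1 - 1/S)^{S·x} for real x (real exponentiation). Then f(1/S) = 1/S, f'(1/S) = -(1 - 1/S)·ln((1 - 1/S)^S) < 1, and for every x > 1/S one has the strict tangent-line bound f(x) < 1/S + f'(1/S)·(x - 1/S). -/
/-!
Put `b = 1 - 1/S ∈ (0, 1)` and `c = b ^ S`, so that `f x = 1 - c ^ x` and `c ^ (1/S) = b`.
The exponential `x ↦ c ^ x` lies strictly above each of its tangent lines (this is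
`y + 1 < exp y` for `y ≠ 0`), so its reflection `f` lies strictly below them.
The slope bound `d < 1` reads `-b log b < 1 - b = 1/S` after dividing by `S`,
which is `log (1/b) < 1/b - 1`.
-/

open Real

namespace Real

theorem rpow_tangent_lt_rpow {c a x : ℝ} (hc : 0 < c) (hc1 : c ≠ 1) (hx : x ≠ a) :
    c ^ a + c ^ a * log c * (x - a) < c ^ x := by
  have hy : log c * (x - a) ≠ 0 :=
    mul_ne_zero (log_ne_zero_of_pos_of_ne_one hc hc1) (sub_ne_zero.2 hx)
  calc c ^ a + c ^ a * log c * (x - a) = c ^ a * (log c * (x - a) + 1) := by ring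
    _ < c ^ a * exp (log c * (x - a)) :=
      mul_lt_mul_of_pos_left (add_one_lt_exp hy) (rpow_pos_of_pos hc a)
    _ = c ^ x := by
      rw [← rpow_def_of_pos hc, ← rpow_add hc, add_sub_cancel]

theorem neg_mul_log_lt_one_sub {b : ℝ} (hb : 0 < b) (hb1 : b ≠ 1) : -(b * log b) < 1 - b := by
  have h := log_lt_sub_one_of_pos (inv_pos.2 hb) (inv_ne_one.2 hb1)
  rw [log_inv] at h
  calc -(b * log b) = b * -log b := by ring
    _ < b * (b⁻¹ - 1) := mul_lt_mul_of_pos_left h hb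
    _ = 1 - b := by rw [mul_sub, mul_inv_cancel₀ hb.ne', mul_one]

end Real

/-- Let `S > 1` be real and `f x = 1 - (1 - 1/S) ^ (S * x)` (real
exponentiation). Then `f (1/S) = 1/S`, the derivative of `f` at `1/S` equals
`d = -(1 - 1/S) * log ((1 - 1/S)^S)`, this derivative satisfies `d < 1`, and for every
`x > 1/S` one has the strict tangent-line bound `f x < 1/S + d * (x - 1/S)`. -/
theorem tangent_line_bound (S : ℝ) (hS : 1 < S)
    (f : ℝ → ℝ) (hf : ∀ x, f x = 1 - (1 - 1 / S) ^ (S * x))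
    (d : ℝ) (hd : d = -(1 - 1 / S) * Real.log ((1 - 1 / S) ^ S)) :
    f (1 / S) = 1 / S ∧ HasDerivAt f d (1 / S) ∧ d < 1 ∧
      ∀ x, 1 / S < x → f x < 1 / S + d * (x - 1 / S) := by
  have hS0 : 0 < S := one_pos.trans hS
  have hb0 : 0 < 1 - 1 / S := sub_pos.2 ((div_lt_one hS0).2 hS)
  have hb1 : 1 - 1 / S < 1 := sub_lt_self 1 (by positivity)
  have hc0 : 0 < (1 - 1 / S) ^ S := rpow_pos_of_pos hb0 S
  have hc1 : (1 - 1 / S) ^ S ≠ 1 := (rpow_lt_one hb0.le hb1 hS0).ne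
  have hf' : ∀ x, f x = 1 - ((1 - 1 / S) ^ S) ^ x := fun x => by
    rw [hf, rpow_mul hb0.le]
  have hcb : ((1 - 1 / S) ^ S) ^ (1 / S) = 1 - 1 / S := by
    rw [← rpow_mul hb0.le, mul_one_div_cancel hS0.ne', rpow_one]
  refine ⟨by rw [hf', hcb, sub_sub_cancel], ?_, ?_, fun x hx => ?_⟩
  · have h := (hasStrictDerivAt_const_rpow hc0 (1 / S)).hasDerivAt.const_sub 1
    rwa [hcb, ← neg_mul, ← hd, ← funext hf'] at h
  · have h := neg_mul_log_lt_one_sub hb0 hb1.ne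
    calc d = S * -((1 - 1 / S) * log (1 - 1 / S)) := by rw [hd, log_rpow hb0]; ring
      _ < S * (1 - (1 - 1 / S)) := mul_lt_mul_of_pos_left h hS0
      _ = 1 := by field_simp; ring
  · have h := rpow_tangent_lt_rpow hc0 hc1 hx.ne'
    rw [hcb] at h
    rw [hf', hd]
    linarith
end

section
/- Fix an integer S ≥ 1 and define the ancestral process (X_i) with values in {1,...,S} as follows: X_0 = S, and conditionally on X_i = t, the value X_{i+1} is distributed as the number of distinct values among t independent uniform draws from {1,...,S}. For a real number S > 1 define the sequence (a_i) by a_0 = 1 and a_{i+1} = 1 - (1 - 1/S)^{a_i · S} (real exponentiation). Then for every i ≥ 0, the expected value of X_i satisfies E[X_i] ≤ a_i · S. -/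
/-!
The expected number of distinct values among `t` uniform draws from `S` values is
`S * (1 - c ^ t)` with `c = 1 - 1/S`, by linearity over the `S` values. Since `x ↦ 1 - c ^ x`
is concave and increasing, Jensen's inequality gives
`E[X_{i+1}] = S * E[1 - c ^ X_i] ≤ S * (1 - c ^ E[X_i]) ≤ S * (1 - c ^ (a_i * S))`,
and the right-hand side is `a_{i+1} * S`.
-/

open Finset

section ImageCard

variable {α β : Type*} [Fintype α] [Fintype β] [DecidableEq β]

theorem card_image_mem_Icc [Nonempty α] (f : α → β) :
    #(univ.image f) ∈ Icc 1 (Fintype.card β) :=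
  mem_Icc.2 ⟨card_pos.2 (univ_nonempty.image f), card_le_univ _⟩

variable [DecidableEq α]

theorem card_filter_not_mem_image (y : β) :
    #{f : α → β | y ∉ univ.image f} = (Fintype.card β - 1) ^ Fintype.card α := by
  have h : ({f : α → β | y ∉ univ.image f} : Finset _) =
      Fintype.piFinset fun _ => univ.erase y := by
    ext f
    simp [Fintype.mem_piFinset, eq_comm]
  rw [h, Fintype.card_piFinset]
  simp

theorem card_filter_mem_image (y : β) :
    #{f : α → β | y ∈ univ.image f} =
      Fintype.card β ^ Fintype.card α - (Fintype.card β - 1) ^ Fintype.card α := by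
  have h := card_filter_add_card_filter_not (s := univ) fun f : α → β => y ∈ univ.image f
  rw [card_filter_not_mem_image, card_univ, Fintype.card_fun] at h
  omega

theorem sum_card_image :
    ∑ f : α → β, #(univ.image f) = Fintype.card β *
      (Fintype.card β ^ Fintype.card α - (Fintype.card β - 1) ^ Fintype.card α) := by
  calc ∑ f : α → β, #(univ.image f)
      = ∑ f : α → β, ∑ y : β, if y ∈ univ.image f then 1 else 0 := by
        simp only [sum_boole, filter_mem_eq_inter, univ_inter, Nat.cast_id]
    _ = ∑ y : β, #{f : α → β | y ∈ univ.image f} := by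
        rw [sum_comm]; simp only [sum_boole, Nat.cast_id]
    _ = _ := by simp only [card_filter_mem_image, sum_const, card_univ, smul_eq_mul]

end ImageCard

section ProbVec

variable {ι : Type*}

def IsProbVec (s : Finset ι) (w : ι → ℝ) : Prop :=
  (∀ t ∈ s, 0 ≤ w t) ∧ ∑ t ∈ s, w t = 1

variable {s : Finset ι}

theorem IsProbVec.vecMul {w : ι → ℝ} {P : ι → ι → ℝ} (hw : IsProbVec s w)
    (hP : ∀ t ∈ s, IsProbVec s (P t)) : IsProbVec s fun v => ∑ t ∈ s, w t * P t v := by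
  refine ⟨fun v hv => sum_nonneg fun t ht => mul_nonneg (hw.1 t ht) ((hP t ht).1 v hv), ?_⟩
  rw [sum_comm]
  simp only [← mul_sum]
  rw [sum_congr rfl fun t ht => by rw [(hP t ht).2, mul_one], hw.2]

theorem IsProbVec.sum_mul_one_sub_rpow_le {w x : ι → ℝ} (hw : IsProbVec s w) {c : ℝ}
    (hc : 0 < c) : ∑ t ∈ s, w t * (1 - c ^ x t) ≤ 1 - c ^ ∑ t ∈ s, w t * x t := by
  have hJensen := (convexOn_rpow_left hc).map_sum_le hw.1 hw.2 fun t _ => Set.mem_univ (x t)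
  simp only [smul_eq_mul] at hJensen
  simp only [mul_sub, mul_one, sum_sub_distrib, hw.2]
  linarith

theorem IsProbVec.iterate {P : ι → ι → ℝ} (hP : ∀ t ∈ s, IsProbVec s (P t))
    {q : ℕ → ι → ℝ} (hq0 : IsProbVec s (q 0))
    (hq : ∀ i v, q (i + 1) v = ∑ t ∈ s, q i t * P t v) (i : ℕ) :
    IsProbVec s (q i) := by
  induction i with
  | zero => exact hq0
  | succ i ih => simpa only [← hq] using ih.vecMul hP

theorem sum_mul_sum_mul_comm (x w : ι → ℝ) (P : ι → ι → ℝ) :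
    ∑ v ∈ s, x v * ∑ t ∈ s, w t * P t v = ∑ t ∈ s, w t * ∑ v ∈ s, x v * P t v := by
  simp only [mul_sum]
  rw [sum_comm]
  exact sum_congr rfl fun t _ => sum_congr rfl fun v _ => mul_left_comm _ _ _

end ProbVec

noncomputable def imageCardProb (S t v : ℕ) : ℝ :=
  #{f : Fin t → Fin S | #(univ.image f) = v} / (S : ℝ) ^ t

theorem isProbVec_imageCardProb {S t : ℕ} (hS : 0 < S) (ht : 0 < t) :
    IsProbVec (Icc 1 S) (imageCardProb S t) := by
  have : Nonempty (Fin t) := ⟨⟨0, ht⟩⟩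
  have hfib : ∑ v ∈ Icc 1 S, #{f : Fin t → Fin S | #(univ.image f) = v} = S ^ t := by
    rw [← card_eq_sum_card_fiberwise fun f _ => by simpa using card_image_mem_Icc f]
    simp
  refine ⟨fun v _ => by unfold imageCardProb; positivity, ?_⟩
  simp only [imageCardProb]
  rw [← sum_div, div_eq_one_iff_eq (by positivity)]
  exact_mod_cast hfib

theorem sum_mul_imageCardProb {S t : ℕ} (hS : 0 < S) (ht : 0 < t) :
    ∑ v ∈ Icc 1 S, (v : ℝ) * imageCardProb S t v = S * (1 - (1 - 1 / (S : ℝ)) ^ t) := by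
  have : Nonempty (Fin t) := ⟨⟨0, ht⟩⟩
  have hfib : ∑ v ∈ Icc 1 S, v * #{f : Fin t → Fin S | #(univ.image f) = v} =
      S * (S ^ t - (S - 1) ^ t) := by
    have h := sum_card_image (α := Fin t) (β := Fin S)
    rw [Fintype.card_fin, Fintype.card_fin] at h
    rw [← h, ← sum_fiberwise_of_maps_to (s := univ) (t := Icc 1 S)
      (g := fun f : Fin t → Fin S => #(univ.image f))
      fun f _ => by simpa using card_image_mem_Icc f]
    refine sum_congr rfl fun v _ => ?_
    rw [mul_comm, ← smul_eq_mul, ← sum_const]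
    exact sum_congr rfl fun f hf => by rw [(mem_filter.1 hf).2]
  have hle : (S - 1) ^ t ≤ S ^ t := Nat.pow_le_pow_left (Nat.sub_le S 1) t
  simp only [imageCardProb, ← mul_div_assoc]
  rw [← sum_div]
  rw_mod_cast [hfib]
  push_cast [Nat.cast_sub hle, Nat.cast_pred hS]
  rw [one_sub_div (by positivity), div_pow]
  field_simp

theorem sum_mul_vecMul_imageCardProb {S : ℕ} (hS : 0 < S) (w : ℕ → ℝ) :
    ∑ v ∈ Icc 1 S, (v : ℝ) * ∑ t ∈ Icc 1 S, w t * imageCardProb S t v =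
      S * ∑ t ∈ Icc 1 S, w t * (1 - (1 - 1 / (S : ℝ)) ^ (t : ℝ)) := by
  rw [sum_mul_sum_mul_comm, mul_sum]
  refine sum_congr rfl fun t ht => ?_
  rw [sum_mul_imageCardProb hS (mem_Icc.1 ht).1, Real.rpow_natCast]
  ring

/-- Fix an integer `S ≥ 2`. The ancestral process `(X_i)` is the Markov chain
on `{1,...,S}` with `X_0 = S` in which, given `X_i = t`, the next state `X_{i+1}` is
distributed as the number of distinct values among `t` independent uniform draws from
`{1,...,S}`.  Here `q i t` is the probability that `X_i = t`, with `P t v` the one-step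
transition probability (the probability that a uniformly random function `Fin t → Fin S`
has image of cardinality `v`), and the expectation `E[X_i]` is `∑ t, t * q i t`.
With `a 0 = 1`, `a (i+1) = 1 - (1 - 1/S) ^ (a i * S)` (real exponentiation),
we have `E[X_i] ≤ a i * S` for every `i`. -/
theorem expected_active_le (S : ℕ) (hS : 2 ≤ S)
    (P : ℕ → ℕ → ℝ)
    (hP : ∀ t v, P t v =
      ((Finset.univ.filter
          (fun f : Fin t → Fin S => (Finset.univ.image f).card = v)).card : ℝ) / (S : ℝ) ^ t)
    (q : ℕ → ℕ → ℝ)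
    (hq0 : ∀ t, q 0 t = if t = S then 1 else 0)
    (hqrec : ∀ i v, q (i + 1) v = ∑ t ∈ Finset.Icc 1 S, q i t * P t v)
    (a : ℕ → ℝ) (ha0 : a 0 = 1)
    (harec : ∀ i, a (i + 1) = 1 - (1 - 1 / (S : ℝ)) ^ (a i * (S : ℝ))) :
    ∀ i, ∑ t ∈ Finset.Icc 1 S, (t : ℝ) * q i t ≤ a i * (S : ℝ) := by
  obtain rfl : P = imageCardProb S := funext fun t => funext (hP t)
  have hS0 : 0 < S := by omega
  set c : ℝ := 1 - 1 / (S : ℝ) with hc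
  have hc0 : 0 < c := by
    rw [hc, sub_pos, div_lt_one (by positivity)]
    exact_mod_cast hS
  have hc1 : c ≤ 1 := sub_le_self _ (by positivity)
  have hq : ∀ i, IsProbVec (Icc 1 S) (q i) :=
    IsProbVec.iterate (fun t ht => isProbVec_imageCardProb hS0 (mem_Icc.1 ht).1)
      ⟨fun t _ => by rw [hq0]; split_ifs <;> norm_num, by simp [hq0, Nat.one_le_of_lt hS]⟩ hqrec
  intro i
  induction i with
  | zero => simp [hq0, ha0, Nat.one_le_of_lt hS]
  | succ i ih =>
    calc ∑ v ∈ Icc 1 S, (v : ℝ) * q (i + 1) v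
        = S * ∑ t ∈ Icc 1 S, q i t * (1 - c ^ (t : ℝ)) := by
          simp only [hqrec]
          exact sum_mul_vecMul_imageCardProb hS0 (q i)
      _ ≤ S * (1 - c ^ ∑ t ∈ Icc 1 S, q i t * (t : ℝ)) := by
        gcongr
        exact (hq i).sum_mul_one_sub_rpow_le hc0
      _ ≤ S * (1 - c ^ (a i * S)) := by
        gcongr S * (1 - ?_)
        refine Real.rpow_le_rpow_of_exponent_ge hc0 hc1 ?_
        simpa only [mul_comm] using ih
      _ = a (i + 1) * S := by rw [harec, mul_comm]
end

section
/- Let S ≥ 1 be an integer, a ≥ 1 an integer, and let p = (p_1,...,p_S) be a probability vector (p_j ≥ 0, Σ_{j=1}^{S} p_j = 1). Then Σ_{j=1}^{S} (1 - (1 - p_j)^a) ≤ S·(1 - (1 - 1/S)^a). Equivalently, Σ_{j=1}^{S} (1 - p_j)^a ≥ (S-1)^a / S^{a-1}, so that among all parent-selection distributions the uniform distribution maximizes the expected number of distinct parents chosen by a independent children. -/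
open Finset

/-- uniform descendancy minimizes ancestor collapse: for any probability
vector `p` on `Fin S` and any integer `a ≥ 1`, the expected number of distinct parents
chosen by `a` independent children, `∑ j, (1 - (1 - p j)^a)`, is at most
`S * (1 - (1 - 1/S)^a)`, the value for the uniform distribution; equivalently,
`∑ j, (1 - p j)^a ≥ (S-1)^a / S^(a-1)`. -/
theorem uniform_maximizes_expected_distinct (S a : ℕ) (hS : 1 ≤ S) (ha : 1 ≤ a)
    (p : Fin S → ℝ) (hp0 : ∀ j, 0 ≤ p j) (hp1 : ∑ j, p j = 1) :
    (∑ j, (1 - (1 - p j) ^ a) ≤ (S : ℝ) * (1 - (1 - 1 / (S : ℝ)) ^ a))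
    ∧ ((S : ℝ) - 1) ^ a / (S : ℝ) ^ (a - 1) ≤ ∑ j, (1 - p j) ^ a := by
  have hSpos : (0 : ℝ) < S := by exact_mod_cast hS
  have hq0 : ∀ j ∈ (univ : Finset (Fin S)), (0 : ℝ) ≤ 1 - p j := by
    intro j _
    have : p j ≤ 1 := hp1 ▸ single_le_sum (fun i _ => hp0 i) (mem_univ j)
    linarith
  have hqsum : ∑ j, (1 - p j) = (S : ℝ) - 1 := by
    simp [Finset.sum_sub_distrib, hp1]
  have key : ((S : ℝ) - 1) ^ a / (S : ℝ) ^ (a - 1) ≤ ∑ j, (1 - p j) ^ a := by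
    have h := pow_sum_div_card_le_sum_pow hq0 (a - 1)
    rwa [hqsum, Nat.sub_add_cancel ha, Finset.card_univ, Fintype.card_fin] at h
  refine ⟨?_, key⟩
  have hS1 : ((S : ℝ) - 1) ^ a / (S : ℝ) ^ (a - 1)
      = (S : ℝ) * ((1 - 1 / (S : ℝ)) ^ a) := by
    have hpow : (S : ℝ) ^ a = (S : ℝ) ^ (a - 1) * S := by
      rw [← pow_succ, Nat.sub_add_cancel ha]
    have : (1 - 1 / (S : ℝ)) ^ a = ((S : ℝ) - 1) ^ a / (S : ℝ) ^ a := by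
      rw [one_sub_div hSpos.ne', div_pow]
    rw [this, hpow]
    field_simp
  have : ∑ j, (1 - (1 - p j) ^ a) = (S : ℝ) - ∑ j, (1 - p j) ^ a := by
    simp [Finset.sum_sub_distrib]
  rw [this, mul_sub, mul_one]
  rw [hS1] at key
  linarith
end
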